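/- Let M = Z ρ̂⁻¹ ∈ ℝ^{n×p} with truncated rank-r SVD M_r = Û'_r Ŝ'_r (V̂'_r)ᵀ and residual M − M_r = Û'_⊥ Ŝ'_⊥ (V̂'_⊥)ᵀ. Let L ∈ ℝ^{n×p} have rank r with right-singular basis V' and suppose β* ∈ col(V'). Then for any β̂ ∈ ℝ^p: ‖M β̂ − M_r β̂‖₂ ≤ ‖M − L‖_op · ( ‖β̂ − β*‖₂ + ‖V̂'_r (V̂'_r)ᵀ − V'(V')ᵀ‖_op ‖β*‖₂ ). -/

import Mathlib

/-! Since the rows of `M - M_r` lie in `span V̂'_⊥`, the residual only sees `P β̂`, where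
`P = V̂'_⊥ (V̂'_⊥)ᵀ`, and `‖M - M_r‖_op ≤ ‖M - L‖_op` by optimality of `M_r`. Writing
`P β̂ = P (β̂ - β*) + P β*`, the projection `P` contracts the first term, and
`P β* = (1 - V̂'_r (V̂'_r)ᵀ) β* = (V' V'ᵀ - V̂'_r (V̂'_r)ᵀ) β*` because `β* ∈ col V'`. -/

open Matrix

/-- ℓ₂ norm of a vector in `ℝⁿ`. -/
noncomputable def l2 {n : ℕ} (v : Fin n → ℝ) : ℝ := Real.sqrt (∑ i, v i ^ 2)

/-- Operator (spectral) norm of a real matrix, via the induced Euclidean operator norm. -/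
noncomputable def opnorm {n p : ℕ} (M : Matrix (Fin n) (Fin p) ℝ) : ℝ :=
  ‖LinearMap.toContinuousLinearMap (Matrix.toEuclideanLin M)‖

lemma l2_eq_norm {n : ℕ} (v : Fin n → ℝ) : l2 v = ‖WithLp.toLp 2 v‖ := by
  simp only [l2, EuclideanSpace.norm_eq, Real.norm_eq_abs, sq_abs]

lemma l2_nonneg {n : ℕ} (v : Fin n → ℝ) : 0 ≤ l2 v := Real.sqrt_nonneg _

lemma l2_sq {n : ℕ} (v : Fin n → ℝ) : l2 v ^ 2 = v ⬝ᵥ v := by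
  rw [l2, Real.sq_sqrt (by positivity)]
  simp only [dotProduct, sq]

lemma l2_add_le {n : ℕ} (a b : Fin n → ℝ) : l2 (a + b) ≤ l2 a + l2 b := by
  simpa only [l2_eq_norm, WithLp.toLp_add] using norm_add_le (WithLp.toLp 2 a) (WithLp.toLp 2 b)

lemma l2_neg {n : ℕ} (v : Fin n → ℝ) : l2 (-v) = l2 v := by
  simp only [l2, Pi.neg_apply, neg_sq]

lemma dotProduct_le_l2_mul_l2 {n : ℕ} (a b : Fin n → ℝ) : a ⬝ᵥ b ≤ l2 a * l2 b :=
  Real.sum_mul_le_sqrt_mul_sqrt _ a b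

lemma l2_mulVec_le {n p : ℕ} (A : Matrix (Fin n) (Fin p) ℝ) (v : Fin p → ℝ) :
    l2 (A *ᵥ v) ≤ opnorm A * l2 v := by
  rw [l2_eq_norm, l2_eq_norm]
  exact (LinearMap.toContinuousLinearMap (Matrix.toEuclideanLin A)).le_opNorm (WithLp.toLp 2 v)

lemma mulVec_dotProduct_mulVec {n p : ℕ} (A : Matrix (Fin n) (Fin p) ℝ) (x y : Fin p → ℝ) :
    (A *ᵥ x) ⬝ᵥ (A *ᵥ y) = x ⬝ᵥ ((Aᵀ * A) *ᵥ y) := by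
  rw [← mulVec_mulVec, dotProduct_transpose_mulVec, dotProduct_comm]

lemma l2_mulVec_le_of_transpose_mul_self {p : ℕ} {P : Matrix (Fin p) (Fin p) ℝ}
    (hP : Pᵀ * P = P) (x : Fin p → ℝ) : l2 (P *ᵥ x) ≤ l2 x := by
  have h : l2 (P *ᵥ x) ^ 2 ≤ l2 x * l2 (P *ᵥ x) := by
    rw [l2_sq, mulVec_dotProduct_mulVec, hP]
    exact dotProduct_le_l2_mul_l2 _ _
  nlinarith [l2_nonneg (P *ᵥ x), l2_nonneg x]

lemma transpose_mul_self_mul_transpose {p k : ℕ} {U : Matrix (Fin p) (Fin k) ℝ}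
    (hU : Uᵀ * U = 1) : (U * Uᵀ)ᵀ * (U * Uᵀ) = U * Uᵀ := by
  rw [transpose_mul, transpose_transpose, Matrix.mul_assoc, ← Matrix.mul_assoc Uᵀ, hU,
    Matrix.one_mul]

lemma l2_mulVec_le_of_add_eq_one {p : ℕ} {P Q R : Matrix (Fin p) (Fin p) ℝ}
    (hP : Pᵀ * P = P) (hRP : R + P = 1) {b : Fin p → ℝ} (hb : Q *ᵥ b = b) (x : Fin p → ℝ) :
    l2 (P *ᵥ x) ≤ l2 (x - b) + opnorm (R - Q) * l2 b := by
  have hPb : P *ᵥ b = -((R - Q) *ᵥ b) := by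
    rw [eq_sub_of_add_eq' hRP, sub_mulVec, sub_mulVec, one_mulVec, hb, neg_sub]
  calc l2 (P *ᵥ x) = l2 (P *ᵥ (x - b) + P *ᵥ b) := by rw [← mulVec_add, sub_add_cancel]
    _ ≤ l2 (P *ᵥ (x - b)) + l2 (P *ᵥ b) := l2_add_le _ _
    _ ≤ l2 (x - b) + opnorm (R - Q) * l2 b := by
      rw [hPb, l2_neg]
      exact add_le_add (l2_mulVec_le_of_transpose_mul_self hP _) (l2_mulVec_le _ _)

theorem implicit_cleaning_bound_general {n p r : ℕ}
    (M Mr L : Matrix (Fin n) (Fin p) ℝ)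
    (Vr V' : Matrix (Fin p) (Fin r) ℝ) (Vperp : Matrix (Fin p) (Fin (p - r)) ℝ)
    -- orthonormal right-singular bases, complementary projections
    (hVperp : Vperp.transpose * Vperp = 1)
    (hcompl : Vr * Vr.transpose + Vperp * Vperp.transpose = 1)
    -- the residual M − M_r has rows supported on the span of V̂'_⊥
    (hres : M - Mr = (M - Mr) * (Vperp * Vperp.transpose))
    -- M_r is a best rank-r approximation of M (truncated SVD), with rank ≤ r
    (hbest : ∀ L' : Matrix (Fin n) (Fin p) ℝ, L'.rank ≤ r →
      opnorm (M - Mr) ≤ opnorm (M - L'))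
    -- L has rank r with right-singular basis V'
    (hL_rank : L.rank = r)
    (βhat βstar : Fin p → ℝ)
    -- β* lies in the column span of V'
    (hβ : (V' * V'.transpose) *ᵥ βstar = βstar) :
    l2 (M *ᵥ βhat - Mr *ᵥ βhat)
      ≤ opnorm (M - L)
          * (l2 (βhat - βstar)
              + opnorm (Vr * Vr.transpose - V' * V'.transpose) * l2 βstar) := by
  have hresidual : M *ᵥ βhat - Mr *ᵥ βhat = (M - Mr) *ᵥ ((Vperp * Vperpᵀ) *ᵥ βhat) := by
    rw [mulVec_mulVec, ← hres, sub_mulVec]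
  rw [hresidual]
  calc l2 ((M - Mr) *ᵥ ((Vperp * Vperpᵀ) *ᵥ βhat))
      ≤ opnorm (M - Mr) * l2 ((Vperp * Vperpᵀ) *ᵥ βhat) := l2_mulVec_le _ _
    _ ≤ opnorm (M - L) * (l2 (βhat - βstar) + opnorm (Vr * Vrᵀ - V' * V'ᵀ) * l2 βstar) :=
      mul_le_mul (hbest L hL_rank.le)
        (l2_mulVec_le_of_add_eq_one (transpose_mul_self_mul_transpose hVperp) hcompl hβ βhat)
        (l2_nonneg _) (norm_nonneg _)

/-- implicit cleaning via projection geometry: let `M` have truncated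
rank-`r` SVD `M_r` (a best rank-`r` approximation, with right-singular basis `V̂'_r` and
residual supported on the complementary right-singular basis `V̂'_⊥`), let `L` have rank
`r` with right-singular basis `V'`, and `β* ∈ col(V')`.  Then for any `β̂`:
`‖Mβ̂ − M_rβ̂‖₂ ≤ ‖M − L‖_op (‖β̂ − β*‖₂ + ‖V̂'_r(V̂'_r)ᵀ − V'(V')ᵀ‖_op ‖β*‖₂)`. -/
theorem implicit_cleaning_bound {n p r : ℕ}
    (M Mr L : Matrix (Fin n) (Fin p) ℝ)
    (Vr V' : Matrix (Fin p) (Fin r) ℝ) (Vperp : Matrix (Fin p) (Fin (p - r)) ℝ)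
    -- orthonormal right-singular bases, complementary projections
    (hVr : Vr.transpose * Vr = 1) (hVperp : Vperp.transpose * Vperp = 1)
    (hV' : V'.transpose * V' = 1)
    (hcompl : Vr * Vr.transpose + Vperp * Vperp.transpose = 1)
    -- the residual M − M_r has rows supported on the span of V̂'_⊥
    (hres : M - Mr = (M - Mr) * (Vperp * Vperp.transpose))
    -- M_r is a best rank-r approximation of M (truncated SVD), with rank ≤ r
    (hMr_rank : Mr.rank ≤ r)
    (hbest : ∀ L' : Matrix (Fin n) (Fin p) ℝ, L'.rank ≤ r →
      opnorm (M - Mr) ≤ opnorm (M - L'))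
    -- L has rank r with right-singular basis V'
    (hL_rank : L.rank = r)
    (hLrow : L = L * (V' * V'.transpose))
    (βhat βstar : Fin p → ℝ)
    -- β* lies in the column span of V'
    (hβ : (V' * V'.transpose) *ᵥ βstar = βstar) :
    l2 (M *ᵥ βhat - Mr *ᵥ βhat)
      ≤ opnorm (M - L)
          * (l2 (βhat - βstar)
              + opnorm (Vr * Vr.transpose - V' * V'.transpose) * l2 βstar) :=
  implicit_cleaning_bound_general M Mr L Vr V' Vperp hVperp hcompl hres hbest hL_rank βhat βstar hβ
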